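/- arXiv:1407.6427 — 2 statements merged into one kernel-verified Lean document; each statement's English description precedes it below -/
import Mathlib

section
/- Let A be an abelian group. Let C = ∏_{n≥1} A^n, let β : C → C be the automorphism acting on each factor A^n by the cyclic shift β_n(a_1,…,a_n) = (a_n, a_1, …, a_{n-1}), and let D ≤ C be the subgroup of elements (a^n_j) for which, for each n, a^n_j is independent of j (i.e. a^n_j = c_n for some c_n ∈ A). Then the quotient C/(im(1−β) + D) is isomorphic to ∏_{n≥1} A/nA; the isomorphism is induced by the map (a^n_j) ↦ (Σ_{j=1}^n a^n_j mod nA)_{n≥1}. In particular, if A is divisible then C/(im(1−β) + D) = 0. -/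
/-- `C = ∏_{n ≥ 1} Aⁿ`: the `n`-th factor (`n ≥ 1`) is `Aⁿ`, realised as `Fin n → A`;
we index by `m : ℕ`, the factor at `m` being `A^{m+1}`. -/
abbrev ProdPowers (A : Type) [AddCommGroup A] : Type := ∀ m : ℕ, Fin (m + 1) → A

/-- The automorphism `β` of `C` acting on each factor `Aⁿ` by the cyclic shift
`βₙ(a₁,…,aₙ) = (aₙ, a₁, …, a_{n−1})`, i.e. `(βa)ⁿ_i = aⁿ_{i−1 (mod n)}`. -/
def cyclicShift (A : Type) [AddCommGroup A] : ProdPowers A →+ ProdPowers A where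
  toFun a := fun m i => a m (i - 1)
  map_zero' := rfl
  map_add' _ _ := rfl

/-- The subgroup `D ≤ C` of tuples `(aⁿ_j)` with `aⁿ_j` independent of `j`. -/
def constantTuples (A : Type) [AddCommGroup A] : AddSubgroup (ProdPowers A) where
  carrier := {a | ∀ (m : ℕ) (i j : Fin (m + 1)), a m i = a m j}
  add_mem' := by
    intro a b ha hb m i j
    show a m i + b m i = a m j + b m j
    rw [ha m i j, hb m i j]
  zero_mem' := fun _ _ _ => rfl
  neg_mem' := by
    intro a ha m i j
    show -(a m i) = -(a m j)
    rw [ha m i j]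

/-- The subgroup `nA = {n·a : a ∈ A}` of an abelian group `A`. -/
def nMultiples (A : Type) [AddCommGroup A] (n : ℕ) : AddSubgroup A where
  carrier := {x | ∃ a : A, n • a = x}
  add_mem' := by
    rintro x y ⟨a, ha⟩ ⟨b, hb⟩
    exact ⟨a + b, by rw [smul_add, ha, hb]⟩
  zero_mem' := ⟨0, smul_zero n⟩
  neg_mem' := by
    rintro x ⟨a, ha⟩
    exact ⟨-a, by rw [smul_neg, ha]⟩

/-!
The level sums `a ↦ (Σⱼ aⁿⱼ mod nA)ₙ` form a surjection `C → ∏ₙ A/nA`, so it suffices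
to identify its kernel with `im(1−β) + D`. A tuple in `im(1−β)` has level sums `0`, and
a constant tuple `c` has level sums `n • c ∈ nA`. Conversely, if `Σⱼ aⁿⱼ = n • cₙ`, then
`a − (cₙ)ₙ` has level sums `0`, so at each level it is `b − βb` with `b` its partial sums.
-/

lemma Fintype.sum_sub_comp_sub_eq_zero {G M : Type*} [AddGroup G] [Fintype G] [AddCommGroup M]
    (b : G → M) (g : G) : ∑ j, (b j - b (j - g)) = 0 := by
  rw [Finset.sum_sub_distrib, sub_eq_zero]
  exact (Fintype.sum_equiv (Equiv.subRight g) _ _ fun _ => rfl).symm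

lemma Fin.sum_Iic_sub_sum_Iic_sub_one {M : Type*} [AddCommGroup M] {n : ℕ}
    (x : Fin (n + 1) → M) (hx : ∑ j, x j = 0) (j : Fin (n + 1)) :
    ∑ i ∈ Finset.Iic j, x i - ∑ i ∈ Finset.Iic (j - 1), x i = x j := by
  rcases eq_or_ne j 0 with rfl | hj
  · have hlast : Finset.Iic (0 - 1 : Fin (n + 1)) = Finset.univ := by
      ext i; simp [Fin.le_iff_val_le_val, Fin.is_le]
    have hzero : Finset.Iic (0 : Fin (n + 1)) = {0} := by ext i; simp
    rw [hlast, hx, sub_zero, hzero, Finset.sum_singleton]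
  · have hIio : Finset.Iio j = Finset.Iic (j - 1) := by
      ext i
      rw [Finset.mem_Iio, Finset.mem_Iic, Fin.lt_def, Fin.le_def, Fin.coe_sub_one, if_neg hj]
      have := Fin.pos_of_ne_zero hj
      omega
    rw [← hIio, ← Finset.Iio_insert, Finset.sum_insert Finset.notMem_Iio_self,
      add_sub_cancel_right]

lemma cyclicShift_apply {A : Type} [AddCommGroup A] (a : ProdPowers A) (m : ℕ)
    (i : Fin (m + 1)) : cyclicShift A a m i = a m (i - 1) :=
  rfl

section levelSum

variable {A : Type} [AddCommGroup A]

variable (A) in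
def levelSum : ProdPowers A →+ ∀ m : ℕ, A ⧸ nMultiples A (m + 1) where
  toFun a m := QuotientAddGroup.mk (∑ j, a m j)
  map_zero' := by ext; simp
  map_add' a b := by ext; simp [Finset.sum_add_distrib]

lemma levelSum_apply (a : ProdPowers A) (m : ℕ) :
    levelSum A a m = QuotientAddGroup.mk (∑ j, a m j) :=
  rfl

lemma mem_ker_levelSum_iff {a : ProdPowers A} :
    a ∈ (levelSum A).ker ↔ ∀ m, ∑ j, a m j ∈ nMultiples A (m + 1) := by
  simp only [AddMonoidHom.mem_ker, funext_iff, levelSum_apply, Pi.zero_apply,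
    QuotientAddGroup.eq_zero_iff]

lemma range_id_sub_cyclicShift_le_ker_levelSum :
    (AddMonoidHom.id (ProdPowers A) - cyclicShift A).range ≤ (levelSum A).ker := by
  rintro _ ⟨b, rfl⟩
  refine mem_ker_levelSum_iff.2 fun m => ?_
  simp only [AddMonoidHom.sub_apply, AddMonoidHom.id_apply, Pi.sub_apply, cyclicShift_apply,
    Fintype.sum_sub_comp_sub_eq_zero]
  exact zero_mem _

lemma constantTuples_le_ker_levelSum : constantTuples A ≤ (levelSum A).ker := by
  intro a ha
  refine mem_ker_levelSum_iff.2 fun m => ⟨a m 0, ?_⟩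
  rw [Finset.sum_congr rfl fun j _ => ha m j 0, Finset.sum_const, Finset.card_univ,
    Fintype.card_fin]

lemma mem_range_id_sub_cyclicShift_of_sum_eq_zero {x : ProdPowers A}
    (hx : ∀ m, ∑ j, x m j = 0) :
    x ∈ (AddMonoidHom.id (ProdPowers A) - cyclicShift A).range :=
  ⟨fun m j => ∑ i ∈ Finset.Iic j, x m i,
    funext fun m => funext fun j => Fin.sum_Iic_sub_sum_Iic_sub_one (x m) (hx m) j⟩

lemma ker_levelSum_le :
    (levelSum A).ker ≤
      (AddMonoidHom.id (ProdPowers A) - cyclicShift A).range ⊔ constantTuples A := by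
  intro a ha
  choose c hc using mem_ker_levelSum_iff.1 ha
  let d : ProdPowers A := fun m _ => c m
  have hd : d ∈ constantTuples A := fun _ _ _ => rfl
  have hsum : ∀ m, ∑ j, (a - d) m j = 0 := fun m => by
    simp only [Pi.sub_apply, Finset.sum_sub_distrib, d, Finset.sum_const, Finset.card_univ,
      Fintype.card_fin, hc m, sub_self]
  rw [← sub_add_cancel a d]
  exact add_mem (AddSubgroup.mem_sup_left (mem_range_id_sub_cyclicShift_of_sum_eq_zero hsum))
    (AddSubgroup.mem_sup_right hd)

lemma ker_levelSum :
    (levelSum A).ker =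
      (AddMonoidHom.id (ProdPowers A) - cyclicShift A).range ⊔ constantTuples A :=
  le_antisymm ker_levelSum_le
    (sup_le range_id_sub_cyclicShift_le_ker_levelSum constantTuples_le_ker_levelSum)

lemma levelSum_surjective : Function.Surjective (levelSum A) := by
  classical
  intro q
  refine ⟨fun m => Pi.single 0 (q m).out, funext fun m => ?_⟩
  rw [levelSum_apply, Finset.sum_pi_single', if_pos (Finset.mem_univ _)]
  exact QuotientAddGroup.out_eq' (q m)

end levelSum

/-- **Statement 16.** Let `A` be an abelian group, `C = ∏_{n≥1} Aⁿ`, `β : C → C` the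
product of the cyclic shifts, and `D ≤ C` the subgroup of tuples constant at each
level.  Then `C/(im(1−β) + D) ≅ ∏_{n≥1} A/nA`, the isomorphism being induced by
`(aⁿ_j) ↦ (Σ_{j=1}ⁿ aⁿ_j mod nA)_{n≥1}`.  In particular, if `A` is divisible then
`C/(im(1−β) + D) = 0`. -/
theorem quotient_by_shift_and_constants (A : Type) [AddCommGroup A] :
    (∃ e : (ProdPowers A ⧸
        ((AddMonoidHom.id (ProdPowers A) - cyclicShift A).range ⊔ constantTuples A)) ≃+
        (∀ m : ℕ, A ⧸ nMultiples A (m + 1)),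
      ∀ a : ProdPowers A, e (QuotientAddGroup.mk a) =
        fun m => QuotientAddGroup.mk (∑ j, a m j)) ∧
    ((∀ n : ℕ, n ≠ 0 → Function.Surjective fun a : A => n • a) →
      ∀ x : ProdPowers A ⧸
        ((AddMonoidHom.id (ProdPowers A) - cyclicShift A).range ⊔ constantTuples A),
        x = 0) := by
  let e := (QuotientAddGroup.quotientAddEquivOfEq (ker_levelSum (A := A))).symm.trans
    (QuotientAddGroup.quotientKerEquivOfSurjective _ levelSum_surjective)
  have he : ∀ a : ProdPowers A, e (QuotientAddGroup.mk a) = levelSum A a := fun _ => rfl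
  refine ⟨⟨e, he⟩, fun hdiv x => ?_⟩
  induction x using QuotientAddGroup.induction_on with
  | H a =>
    refine e.injective ?_
    rw [he, map_zero, ← AddMonoidHom.mem_ker, mem_ker_levelSum_iff]
    exact fun m => hdiv (m + 1) m.succ_ne_zero _
end

section
/- Let ∂₂ : ℤ^6 → ℤ^5 be the ℤ-linear map defined on the standard basis (indexed by the squares f₀g₀, f₀g₁, f₀g₂, f₁g₀, f₁g₁, f₁g₂, with target basis indexed by f₀, f₁, g₀, g₁, g₂) by: ∂₂(f₀g₀) = f₀ + g₀ − g₁ − f₁, ∂₂(f₁g₀) = f₁ + g₀ − g₁ − f₀, ∂₂(f₀g₁) = f₀ + g₁ − g₂ − f₁, ∂₂(f₁g₁) = f₁ + g₁ − g₂ − f₀, ∂₂(f₀g₂) = f₀ + g₂ − g₀ − f₁, ∂₂(f₁g₂) = f₁ + g₂ − g₀ − f₀. Then ker ∂₂ is a free abelian group of rank 3 (with generators b₁ = f₀g₀ + f₁g₀ + 2f₁g₁ + 2f₀g₂, b₂ = −2f₀g₀ + f₀g₁ − 3f₁g₁ − 2f₀g₂, b₃ = 2f₀g₀ + 2f₁g₁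 + f₀g₂ + f₁g₂), and the quotient ℤ^5 / im ∂₂ is a free abelian group of rank 2, with im ∂₂ generated by f₀ − f₁ + g₀ − g₁, g₀ − g₂, and g₁ − g₂. -/
/-- The cubical boundary map `∂₂ : ℤ⁶ → ℤ⁵` of the 2-graph `𝔽_θ⁺`, as the linear map
given by the matrix whose columns (indexed by the squares
`f₀g₀, f₀g₁, f₀g₂, f₁g₀, f₁g₁, f₁g₂`) record the boundaries
`∂₂(f₀g₀) = f₀ + g₀ − g₁ − f₁`, `∂₂(f₀g₁) = f₀ + g₁ − g₂ − f₁`,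
`∂₂(f₀g₂) = f₀ + g₂ − g₀ − f₁`, `∂₂(f₁g₀) = f₁ + g₀ − g₁ − f₀`,
`∂₂(f₁g₁) = f₁ + g₁ − g₂ − f₀`, `∂₂(f₁g₂) = f₁ + g₂ − g₀ − f₀`
in the target basis `f₀, f₁, g₀, g₁, g₂`. -/
def partialTwo : (Fin 6 → ℤ) →ₗ[ℤ] (Fin 5 → ℤ) :=
  Matrix.mulVecLin
    !![1, 1, 1, -1, -1, -1;
       -1, -1, -1, 1, 1, 1;
       1, 0, -1, 1, 0, -1;
       -1, 1, 0, -1, 1, 0;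
       0, -1, 1, 0, -1, 1]

/-!
The five equations `∂₂ v = 0` have rank three: they determine the coordinates of `v` at
`f₀g₀, f₀g₂, f₁g₁` from its coordinates at `f₁g₀, f₀g₁, f₁g₂`, which are free, and `b₁, b₂, b₃`
are the solutions whose free coordinates form the standard basis of `ℤ³`.

For the cokernel, every square has boundary `f + g − g' − f'`, so the map `ℤ⁵ → ℤ²` counting
`f`-edges and `g`-edges kills `im ∂₂`. It is onto, and its kernel is spanned by the three
stated boundaries, so `ℤ⁶ → ℤ⁵ → ℤ² → 0` is exact and `ℤ⁵ / im ∂₂ ≅ ℤ²`.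
-/

def kerGens : Fin 3 → Fin 6 → ℤ :=
  ![![1, 0, 2, 1, 2, 0], ![-2, 1, -2, 0, -3, 0], ![2, 0, 1, 0, 2, 1]]

def imGens : Fin 3 → Fin 5 → ℤ :=
  ![![1, -1, 1, -1, 0], ![0, 0, 1, 0, -1], ![0, 0, 0, 1, -1]]

def degree : (Fin 5 → ℤ) →ₗ[ℤ] (Fin 2 → ℤ) :=
  Matrix.mulVecLin !![1, 1, 0, 0, 0; 0, 0, 1, 1, 1]

theorem range_kerGens : Set.range kerGens =
    {![1, 0, 2, 1, 2, 0], ![-2, 1, -2, 0, -3, 0], ![2, 0, 1, 0, 2, 1]} := by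
  rw [kerGens, Matrix.range_cons, Matrix.range_cons_cons_empty, Set.singleton_union]

theorem range_imGens : Set.range imGens =
    {![1, -1, 1, -1, 0], ![0, 0, 1, 0, -1], ![0, 0, 0, 1, -1]} := by
  rw [imGens, Matrix.range_cons, Matrix.range_cons_cons_empty, Set.singleton_union]

theorem partialTwo_apply (v : Fin 6 → ℤ) :
    partialTwo v = ![v 0 + v 1 + v 2 - v 3 - v 4 - v 5, -v 0 - v 1 - v 2 + v 3 + v 4 + v 5,
      v 0 - v 2 + v 3 - v 5, -v 0 + v 1 - v 3 + v 4, -v 1 + v 2 - v 4 + v 5] := by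
  ext i
  fin_cases i <;> simp [partialTwo, Matrix.mulVec, dotProduct, Fin.sum_univ_six] <;> ring

theorem degree_apply (x : Fin 5 → ℤ) : degree x = ![x 0 + x 1, x 2 + x 3 + x 4] := by
  ext i
  fin_cases i <;> simp [degree, Matrix.mulVec, dotProduct, Fin.sum_univ_five]

theorem ker_partialTwo : LinearMap.ker partialTwo = Submodule.span ℤ (Set.range kerGens) := by
  refine le_antisymm (fun v hv => ?_) ?_
  · rw [LinearMap.mem_ker, partialTwo_apply] at hv
    have h0 : v 0 + v 1 + v 2 - v 3 - v 4 - v 5 = 0 := by simpa using congrFun hv 0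
    have h2 : v 0 - v 2 + v 3 - v 5 = 0 := by simpa using congrFun hv 2
    have h3 : -v 0 + v 1 - v 3 + v 4 = 0 := by simpa using congrFun hv 3
    have h4 : -v 1 + v 2 - v 4 + v 5 = 0 := by simpa using congrFun hv 4
    refine (Submodule.mem_span_range_iff_exists_fun ℤ).mpr ⟨![v 3, v 1, v 5], ?_⟩
    ext i
    fin_cases i <;> simp [kerGens, Fin.sum_univ_three] <;> omega
  · rw [Submodule.span_le, Set.range_subset_iff]
    intro i
    fin_cases i <;> exact LinearMap.mem_ker.mpr (by decide)

theorem linearIndependent_kerGens : LinearIndependent ℤ kerGens := by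
  refine Fintype.linearIndependent_iff.mpr fun c hc => ?_
  have h0 : c 0 = 0 := by simpa [kerGens, Fin.sum_univ_three] using congrFun hc 3
  have h1 : c 1 = 0 := by simpa [kerGens, Fin.sum_univ_three] using congrFun hc 1
  have h2 : c 2 = 0 := by simpa [kerGens, Fin.sum_univ_three] using congrFun hc 5
  intro i
  fin_cases i <;> assumption

theorem range_partialTwo_le_ker_degree : LinearMap.range partialTwo ≤ LinearMap.ker degree := by
  rintro _ ⟨v, rfl⟩
  rw [LinearMap.mem_ker, degree_apply, partialTwo_apply]
  ext i
  fin_cases i <;> simp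
  ring

theorem ker_degree_le : LinearMap.ker degree ≤ Submodule.span ℤ (Set.range imGens) := by
  intro x hx
  rw [LinearMap.mem_ker, degree_apply] at hx
  have h0 : x 0 + x 1 = 0 := by simpa using congrFun hx 0
  have h1 : x 2 + x 3 + x 4 = 0 := by simpa using congrFun hx 1
  refine (Submodule.mem_span_range_iff_exists_fun ℤ).mpr ⟨![x 0, x 2 - x 0, x 0 + x 3], ?_⟩
  ext i
  fin_cases i <;> simp [imGens, Fin.sum_univ_three] <;> omega

theorem span_imGens_le_range :
    Submodule.span ℤ (Set.range imGens) ≤ LinearMap.range partialTwo := by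
  rw [Submodule.span_le, Set.range_subset_iff]
  intro i
  fin_cases i
  · exact ⟨![1, 0, 0, 0, 0, 0], by decide⟩
  · exact ⟨![1, 0, 0, 0, 1, 0], by decide⟩
  · exact ⟨![-1, 0, 0, 0, 0, -1], by decide⟩

theorem range_partialTwo : LinearMap.range partialTwo = Submodule.span ℤ (Set.range imGens) :=
  le_antisymm (range_partialTwo_le_ker_degree.trans ker_degree_le) span_imGens_le_range

theorem exact_partialTwo_degree : Function.Exact partialTwo degree :=
  LinearMap.exact_iff.mpr <|
    le_antisymm (ker_degree_le.trans span_imGens_le_range) range_partialTwo_le_ker_degree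

theorem degree_surjective : Function.Surjective degree := fun y =>
  ⟨![y 0, 0, y 1, 0, 0], by ext i; fin_cases i <;> simp [degree_apply]⟩

/-- **Statement 17.** The kernel of `∂₂` is free abelian of rank `3`, with generators
`b₁ = f₀g₀ + f₁g₀ + 2f₁g₁ + 2f₀g₂`, `b₂ = −2f₀g₀ + f₀g₁ − 3f₁g₁ − 2f₀g₂`,
`b₃ = 2f₀g₀ + 2f₁g₁ + f₀g₂ + f₁g₂`, and the quotient `ℤ⁵/im ∂₂` is free abelian of
rank `2`, with `im ∂₂` generated by `f₀ − f₁ + g₀ − g₁`, `g₀ − g₂` and `g₁ − g₂`.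
(Coordinates on `ℤ⁶` are taken in the basis `f₀g₀, f₀g₁, f₀g₂, f₁g₀, f₁g₁, f₁g₂` and
on `ℤ⁵` in the basis `f₀, f₁, g₀, g₁, g₂`.) -/
theorem kernel_and_cokernel_of_partialTwo :
    LinearMap.ker partialTwo =
      Submodule.span ℤ {![1, 0, 2, 1, 2, 0], ![-2, 1, -2, 0, -3, 0],
        ![2, 0, 1, 0, 2, 1]} ∧
    Nonempty (LinearMap.ker partialTwo ≃ₗ[ℤ] (Fin 3 → ℤ)) ∧
    LinearMap.range partialTwo =
      Submodule.span ℤ {![1, -1, 1, -1, 0], ![0, 0, 1, 0, -1], ![0, 0, 0, 1, -1]} ∧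
    Nonempty (((Fin 5 → ℤ) ⧸ LinearMap.range partialTwo) ≃ₗ[ℤ] (Fin 2 → ℤ)) := by
  rw [← range_kerGens, ← range_imGens]
  exact ⟨ker_partialTwo,
    ⟨(LinearEquiv.ofEq _ _ ker_partialTwo).trans
      (Module.Basis.span linearIndependent_kerGens).equivFun⟩,
    range_partialTwo,
    ⟨exact_partialTwo_degree.linearEquivOfSurjective degree_surjective⟩⟩
end
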